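/- arXiv:2501.13810 — 2 statements merged into one kernel-verified Lean document; each statement's English description precedes it below -/
import Mathlib

section
/- Fix a, b ∈ ℝ with a + b > 0 and fix r1 ∈ ℝ. Then the function f(z) = -a·ln(e^z / (e^z + e^{r1})) - b·ln(e^{r1} / (e^z + e^{r1})) is midpoint convex: for all z1, z2, (f(z1) + f(z2))/2 ≥ f((z1+z2)/2). -/
theorem stmt_1 (a b r1 : ℝ) (hab : a + b > 0)
    (f : ℝ → ℝ)
    (hf : ∀ z, f z = -a * Real.log (Real.exp z / (Real.exp z + Real.exp r1))
        - b * Real.log (Real.exp r1 / (Real.exp z + Real.exp r1))) :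
    ∀ z1 z2 : ℝ, (f z1 + f z2) / 2 ≥ f ((z1 + z2) / 2) := by
  intro z1 z2
  have hc := Real.exp_pos r1
  have h1 := Real.exp_pos z1
  have h2 := Real.exp_pos z2
  have hm := Real.exp_pos ((z1 + z2) / 2)
  have hS : ∀ z : ℝ, 0 < Real.exp z + Real.exp r1 := fun z => by positivity
  have hrw : ∀ z : ℝ, f z = -a * z - b * r1 + (a + b) * Real.log (Real.exp z + Real.exp r1) := by
    intro z
    rw [hf z, Real.log_div (Real.exp_ne_zero z) (ne_of_gt (hS z)),
        Real.log_div (Real.exp_ne_zero r1) (ne_of_gt (hS z)), Real.log_exp, Real.log_exp]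
    ring
  rw [hrw, hrw, hrw]
  have e1 : Real.exp (z1 / 2) * Real.exp (z1 / 2) = Real.exp z1 := by
    rw [← Real.exp_add]; ring_nf
  have e2 : Real.exp (z2 / 2) * Real.exp (z2 / 2) = Real.exp z2 := by
    rw [← Real.exp_add]; ring_nf
  have he : Real.exp ((z1 + z2) / 2) = Real.exp (z1 / 2) * Real.exp (z2 / 2) := by
    rw [← Real.exp_add]; ring_nf
  have hsq : (Real.exp ((z1 + z2) / 2) + Real.exp r1) ^ 2
      ≤ (Real.exp z1 + Real.exp r1) * (Real.exp z2 + Real.exp r1) := by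
    nlinarith [sq_nonneg (Real.exp (z1 / 2) - Real.exp (z2 / 2)), hc.le,
      (Real.exp_pos (z1 / 2)).le, (Real.exp_pos (z2 / 2)).le]
  have key : Real.log (Real.exp ((z1 + z2) / 2) + Real.exp r1)
      ≤ (Real.log (Real.exp z1 + Real.exp r1) + Real.log (Real.exp z2 + Real.exp r1)) / 2 := by
    have hlog := Real.log_le_log (by positivity) hsq
    rw [Real.log_pow, Real.log_mul (ne_of_gt (hS z1)) (ne_of_gt (hS z2))] at hlog
    push_cast at hlog
    linarith
  have hmul := mul_le_mul_of_nonneg_left key hab.le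
  linarith
end

section
/- Fix a, b ∈ ℝ with a + b > 0 and fix r2 ∈ ℝ. Then the function g(r1) = -a·ln(e^{r2}/(e^{r2}+e^{r1})) - b·ln(e^{r1}/(e^{r2}+e^{r1})) is convex on ℝ. -/
open Real

lemma lse_pos (r2 x : ℝ) : 0 < Real.exp r2 + Real.exp x := by positivity

lemma lse_hasDerivAt (r2 x : ℝ) :
    HasDerivAt (fun x => Real.log (Real.exp r2 + Real.exp x))
      (Real.exp x / (Real.exp r2 + Real.exp x)) x := by
  simpa using (((Real.hasDerivAt_exp x).const_add (Real.exp r2)).log (lse_pos r2 x).ne')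

lemma lse_convex (r2 : ℝ) :
    ConvexOn ℝ Set.univ (fun x => Real.log (Real.exp r2 + Real.exp x)) := by
  have hd : deriv (fun x => Real.log (Real.exp r2 + Real.exp x)) =
      fun x => Real.exp x / (Real.exp r2 + Real.exp x) := by
    funext x; exact (lse_hasDerivAt r2 x).deriv
  have hd2 : ∀ x : ℝ, HasDerivAt (fun x => Real.exp x / (Real.exp r2 + Real.exp x))
      ((Real.exp x * (Real.exp r2 + Real.exp x) - Real.exp x * Real.exp x) /
        (Real.exp r2 + Real.exp x) ^ 2) x := fun x =>
    (Real.hasDerivAt_exp x).div ((Real.hasDerivAt_exp x).const_add (Real.exp r2))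
      (lse_pos r2 x).ne'
  apply convexOn_of_deriv2_nonneg convex_univ
  · exact fun x _ => (lse_hasDerivAt r2 x).differentiableAt.continuousAt.continuousWithinAt
  · intro x _; exact (lse_hasDerivAt r2 x).differentiableAt.differentiableWithinAt
  · intro x _
    rw [hd]
    exact (hd2 x).differentiableAt.differentiableWithinAt
  · intro x _
    have : deriv^[2] (fun x => Real.log (Real.exp r2 + Real.exp x)) x =
        deriv (deriv (fun x => Real.log (Real.exp r2 + Real.exp x))) x := rfl
    rw [this, hd, (hd2 x).deriv]
    have h1 : Real.exp x * (Real.exp r2 + Real.exp x) - Real.exp x * Real.exp x =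
        Real.exp x * Real.exp r2 := by ring
    rw [h1]
    positivity

lemma affine_convex (c d : ℝ) : ConvexOn ℝ Set.univ (fun x : ℝ => c * x + d) :=
  ⟨convex_univ, fun x _ y _ s t hs ht hst => by
    simp only [smul_eq_mul]
    have : s * (c * x + d) + t * (c * y + d) = c * (s * x + t * y) + d := by
      linear_combination d * hst
    exact this.ge⟩

theorem stmt_2 (a b r2 : ℝ) (hab : a + b > 0) :
    ConvexOn ℝ Set.univ (fun r1 : ℝ =>
      -a * Real.log (Real.exp r2 / (Real.exp r2 + Real.exp r1))
        - b * Real.log (Real.exp r1 / (Real.exp r2 + Real.exp r1))) := by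
  have h := ((lse_convex r2).smul hab.le).add (affine_convex (-b) (-(a * r2)))
  refine (congrArg (ConvexOn ℝ Set.univ) ?_).mpr h
  funext x
  have hne := (lse_pos r2 x).ne'
  simp only [Pi.add_apply, smul_eq_mul, Real.log_div (Real.exp_ne_zero _) hne, Real.log_exp]
  ring
end
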